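/- Let B(F,G) be the strict 2-category whose objects are lax transformations σ = (p,σ) : F → G, whose 1-morphisms σ₁ → σ₂ are strict transformations α : p₁ → p₂ (paired with ∫_{σ₁}^{σ₂} Gα), and whose 2-morphisms are modifications (paired with the induced maps on equalizers). Then the assignment sending every object to the unique object of M, each 1-morphism (α, ∫Gα) to ∫_{σ₁}^{σ₂} Gα, and each 2-morphism (Γ, ∫GΓ) to ∫_{σ₁}^{σ₂} GΓ, together with the canonical maps ∫Gβ ⊗ ∫Gα → ∫G(β∘α) as laxity maps, defines a lax functor HOM(F,G) : B(F,G) → M. -/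

import Mathlib

open CategoryTheory CategoryTheory.Limits CategoryTheory.MonoidalCategory
open CategoryTheory.Bicategory

universe w v u w₂ v₂ u₂ w₃ v₃ u₃ v₀ u₀

/-- A lax functor from a strict 2-category `C` to a monoidal category `M`,
the latter viewed as a bicategory with a single object. -/
structure MonLaxFunctor (C : Type u) [Bicategory.{w, v} C] [Bicategory.Strict C]
    (M : Type u₀) [Category.{v₀} M] [MonoidalCategory M] where
  map : ∀ {a b : C}, (a ⟶ b) → M
  map₂ : ∀ {a b : C} {f g : a ⟶ b}, (f ⟶ g) → (map f ⟶ map g)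
  map₂_id : ∀ {a b : C} (f : a ⟶ b), map₂ (𝟙 f) = 𝟙 (map f)
  map₂_comp : ∀ {a b : C} {f g h : a ⟶ b} (η : f ⟶ g) (θ : g ⟶ h),
    map₂ (η ≫ θ) = map₂ η ≫ map₂ θ
  /-- laxity maps -/
  μ : ∀ {a b c : C} (f : a ⟶ b) (g : b ⟶ c), map f ⊗ map g ⟶ map (f ≫ g)
  /-- unit laxity maps -/
  ε' : ∀ a : C, 𝟙_ M ⟶ map (𝟙 a)
  μ_natural :
    ∀ {a b c : C} {f f' : a ⟶ b} {g g' : b ⟶ c} (η : f ⟶ f') (θ : g ⟶ g'),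
      (map₂ η ⊗ₘ map₂ θ) ≫ μ f' g' = μ f g ≫ map₂ (η ▷ g ≫ f' ◁ θ)
  assoc :
    ∀ {a b c d : C} (f : a ⟶ b) (g : b ⟶ c) (h : c ⟶ d),
      (μ f g ⊗ₘ 𝟙 (map h)) ≫ μ (f ≫ g) h ≫ eqToHom (by rw [Category.assoc]) =
        (α_ (map f) (map g) (map h)).hom ≫ (𝟙 (map f) ⊗ₘ μ g h) ≫ μ f (g ≫ h)
  left_unit :
    ∀ {a b : C} (f : a ⟶ b),
      (ε' a ⊗ₘ 𝟙 (map f)) ≫ μ (𝟙 a) f = (λ_ (map f)).hom ≫ eqToHom (by rw [Category.id_comp])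
  right_unit :
    ∀ {a b : C} (f : a ⟶ b),
      (𝟙 (map f) ⊗ₘ ε' b) ≫ μ f (𝟙 b) = (ρ_ (map f)).hom ≫ eqToHom (by rw [Category.comp_id])

namespace MonLaxFunctor

variable {C : Type u} [Bicategory.{w, v} C] [Bicategory.Strict C]
variable {M : Type u₀} [Category.{v₀} M] [MonoidalCategory M]

/-- Composition of "elements" of a lax functor, via the laxity maps. -/
def elComp (F : MonLaxFunctor C M) {a b c : C} {k : a ⟶ b} {k' : b ⟶ c}
    (x : 𝟙_ M ⟶ F.map k) (y : 𝟙_ M ⟶ F.map k') : 𝟙_ M ⟶ F.map (k ≫ k') :=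
  (λ_ (𝟙_ M)).inv ≫ (x ⊗ₘ y) ≫ F.μ k k'

/-- Objects of the category of elements `El(F)(A,B)`. -/
structure El (F : MonLaxFunctor C M) (A B : C) where
  k : A ⟶ B
  x : 𝟙_ M ⟶ F.map k

instance elCategory (F : MonLaxFunctor C M) (A B : C) : Category (F.El A B) where
  Hom e e' := { α : e.k ⟶ e'.k // e.x ≫ F.map₂ α = e'.x }
  id e := ⟨𝟙 e.k, by rw [F.map₂_id, Category.comp_id]⟩
  comp u v := ⟨u.1 ≫ v.1, by rw [F.map₂_comp, ← Category.assoc, u.2, v.2]⟩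
  id_comp u := Subtype.ext (Category.id_comp u.1)
  comp_id u := Subtype.ext (Category.comp_id u.1)
  assoc u v w := Subtype.ext (Category.assoc u.1 v.1 w.1)

/-- The `Set`-valued functor `k ↦ Hom_M(I, F k)` on the hom-category `C(A,B)`. -/
def elementsFunctor (F : MonLaxFunctor C M) (A B : C) : (A ⟶ B) ⥤ Type v₀ where
  obj k := 𝟙_ M ⟶ F.map k
  map α := TypeCat.ofHom fun x => x ≫ F.map₂ α
  map_id k := by ext x; simp [F.map₂_id]
  map_comp α β := by
    ext x
    simp [F.map₂_comp]

/-- The projection `Φ_{A,B} : El(F)(A,B) ⥤ C(A,B)`. -/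
def elProj (F : MonLaxFunctor C M) (A B : C) : F.El A B ⥤ (A ⟶ B) where
  obj e := e.k
  map u := u.1
  map_id _ := rfl
  map_comp _ _ := rfl

end MonLaxFunctor

/-- A strict 2-functor between strict 2-categories. -/
structure StrictTwoFunctor (C : Type u) [Bicategory.{w, v} C] [Bicategory.Strict C]
    (D : Type u₂) [Bicategory.{w₂, v₂} D] [Bicategory.Strict D] where
  obj : C → D
  map : ∀ {a b : C}, (a ⟶ b) → (obj a ⟶ obj b)
  map₂ : ∀ {a b : C} {f g : a ⟶ b}, (f ⟶ g) → (map f ⟶ map g)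
  map_id : ∀ a : C, map (𝟙 a) = 𝟙 (obj a)
  map_comp : ∀ {a b c : C} (f : a ⟶ b) (g : b ⟶ c), map (f ≫ g) = map f ≫ map g
  map₂_id : ∀ {a b : C} (f : a ⟶ b), map₂ (𝟙 f) = 𝟙 (map f)
  map₂_comp : ∀ {a b : C} {f g h : a ⟶ b} (η : f ⟶ g) (θ : g ⟶ h),
    map₂ (η ≫ θ) = map₂ η ≫ map₂ θ
  map₂_whisker_left : ∀ {a b c : C} (f : a ⟶ b) {g h : b ⟶ c} (η : g ⟶ h),
    map₂ (f ◁ η) = eqToHom (map_comp f g) ≫ map f ◁ map₂ η ≫ eqToHom (map_comp f h).symm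
  map₂_whisker_right : ∀ {a b c : C} {f g : a ⟶ b} (η : f ⟶ g) (h : b ⟶ c),
    map₂ (η ▷ h) = eqToHom (map_comp f h) ≫ map₂ η ▷ map h ≫ eqToHom (map_comp g h).symm

section Trans

variable {C : Type u} [Bicategory.{w, v} C] [Bicategory.Strict C]
variable {D : Type u₂} [Bicategory.{w₂, v₂} D] [Bicategory.Strict D]
variable {M : Type u₀} [Category.{v₀} M] [MonoidalCategory M]

/-- A lax transformation (icon) `σ : F → p* G` over a strict 2-functor `p`;
a morphism of `M`-valued lax functors. -/
structure MonLaxTrans (F : MonLaxFunctor C M) (G : MonLaxFunctor D M)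
    (p : StrictTwoFunctor C D) where
  app : ∀ {a b : C} (f : a ⟶ b), F.map f ⟶ G.map (p.map f)
  naturality : ∀ {a b : C} {f g : a ⟶ b} (η : f ⟶ g),
    app f ≫ G.map₂ (p.map₂ η) = F.map₂ η ≫ app g
  comp : ∀ {a b c : C} (f : a ⟶ b) (g : b ⟶ c),
    F.μ f g ≫ app (f ≫ g) =
      (app f ⊗ₘ app g) ≫ G.μ (p.map f) (p.map g) ≫ eqToHom (by rw [p.map_comp])
  unit : ∀ a : C, F.ε' a ≫ app (𝟙 a) = G.ε' (p.obj a) ≫ eqToHom (by rw [p.map_id])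

/-- A strict 2-natural transformation between strict 2-functors. -/
structure Strict2NatTrans (p₁ p₂ : StrictTwoFunctor C D) where
  app : ∀ c : C, p₁.obj c ⟶ p₂.obj c
  naturality : ∀ {c d : C} (f : c ⟶ d), p₁.map f ≫ app d = app c ≫ p₂.map f
  naturality₂ : ∀ {c d : C} {f g : c ⟶ d} (η : f ⟶ g),
    p₁.map₂ η ▷ app d ≫ eqToHom (naturality g) = eqToHom (naturality f) ≫ app c ◁ p₂.map₂ η

/-- A modification between strict 2-natural transformations. -/
structure Modification2 {p₁ p₂ : StrictTwoFunctor C D} (α α' : Strict2NatTrans p₁ p₂) where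
  app : ∀ c : C, α.app c ⟶ α'.app c
  w : ∀ {c d : C} (f : c ⟶ d),
    p₁.map f ◁ app d ≫ eqToHom (α'.naturality f) =
      eqToHom (α.naturality f) ≫ app c ▷ p₂.map f

/-- The hexagon axiom of a nerve-transformation `η : σ₁ → σ₂` over `α : p₁ → p₂`. -/
def IsNerveTrans {F : MonLaxFunctor C M} {G : MonLaxFunctor D M}
    {p₁ p₂ : StrictTwoFunctor C D} (σ₁ : MonLaxTrans F G p₁) (σ₂ : MonLaxTrans F G p₂)
    (α : Strict2NatTrans p₁ p₂) (η : ∀ c : C, 𝟙_ M ⟶ G.map (α.app c)) : Prop :=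
  ∀ {c d : C} (f : c ⟶ d),
    (ρ_ (F.map f)).inv ≫ (σ₁.app f ⊗ₘ η d) ≫ G.μ (p₁.map f) (α.app d) =
      (λ_ (F.map f)).inv ≫ (η c ⊗ₘ σ₂.app f) ≫ G.μ (α.app c) (p₂.map f) ≫
        eqToHom (by rw [α.naturality])

end Trans

section Classifier

variable {C : Type u} [Bicategory.{w, v} C] [Bicategory.Strict C]
variable {D : Type u₂} [Bicategory.{w₂, v₂} D] [Bicategory.Strict D]
variable {M : Type u₀} [Category.{v₀} M] [MonoidalCategory M] [SymmetricCategory M]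
  [MonoidalClosed M] [HasProducts.{u} M] [HasProducts.{max u v} M] [HasEqualizers M]

/-- The type of 1-morphisms of `C`. -/
abbrev OneCell (C : Type u) [Bicategory.{w, v} C] : Type max u v := Σ c d : C, c ⟶ d

variable (F : MonLaxFunctor C M) (G : MonLaxFunctor D M)
variable {p₁ p₂ p₃ p₄ : StrictTwoFunctor C D}

/-- First leg of the pair of parallel maps defining the classifying object. -/
noncomputable def classifyA (σ₁ : MonLaxTrans F G p₁) (σ₂ : MonLaxTrans F G p₂)
    (α : Strict2NatTrans p₁ p₂) :
    (∏ᶜ fun c : C => G.map (α.app c)) ⟶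
      ∏ᶜ fun t : OneCell C =>
        (ihom (F.map t.2.2)).obj (G.map (p₁.map t.2.2 ≫ α.app t.2.1)) :=
  Pi.lift fun t => MonoidalClosed.curry
    ((σ₁.app t.2.2 ⊗ₘ Pi.π _ t.2.1) ≫ G.μ (p₁.map t.2.2) (α.app t.2.1))

/-- Second leg of the pair of parallel maps defining the classifying object. -/
noncomputable def classifyB (σ₁ : MonLaxTrans F G p₁) (σ₂ : MonLaxTrans F G p₂)
    (α : Strict2NatTrans p₁ p₂) :
    (∏ᶜ fun c : C => G.map (α.app c)) ⟶
      ∏ᶜ fun t : OneCell C =>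
        (ihom (F.map t.2.2)).obj (G.map (p₁.map t.2.2 ≫ α.app t.2.1)) :=
  Pi.lift fun t => MonoidalClosed.curry
    ((β_ (F.map t.2.2) _).hom ≫ (Pi.π _ t.1 ⊗ₘ σ₂.app t.2.2) ≫
      G.μ (α.app t.1) (p₂.map t.2.2) ≫ eqToHom (by rw [α.naturality]))

/-- The classifying object `∫_{σ₁}^{σ₂} G α` for nerve-transformations over `α`. -/
noncomputable def nerveClassifier (σ₁ : MonLaxTrans F G p₁) (σ₂ : MonLaxTrans F G p₂)
    (α : Strict2NatTrans p₁ p₂) : M :=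
  equalizer (classifyA F G σ₁ σ₂ α) (classifyB F G σ₁ σ₂ α)

/-- The projection `∫_{σ₁}^{σ₂} G α ⟶ G (α_c)`. -/
noncomputable def classProj (σ₁ : MonLaxTrans F G p₁) (σ₂ : MonLaxTrans F G p₂)
    (α : Strict2NatTrans p₁ p₂) (c : C) :
    nerveClassifier F G σ₁ σ₂ α ⟶ G.map (α.app c) :=
  equalizer.ι (classifyA F G σ₁ σ₂ α) (classifyB F G σ₁ σ₂ α) ≫ Pi.π _ c

/-- `t` is the morphism on classifying objects induced by the modification `Γ`. -/
def IsClassInduced {σ₁ : MonLaxTrans F G p₁} {σ₂ : MonLaxTrans F G p₂}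
    {α α' : Strict2NatTrans p₁ p₂} (Γ : Modification2 α α')
    (t : nerveClassifier F G σ₁ σ₂ α ⟶ nerveClassifier F G σ₁ σ₂ α') : Prop :=
  ∀ c : C, t ≫ classProj F G σ₁ σ₂ α' c = classProj F G σ₁ σ₂ α c ≫ G.map₂ (Γ.app c)

/-- `m` is the canonical "laxity" morphism
`(∫_{σ₂}^{σ₃} G β) ⊗ (∫_{σ₁}^{σ₂} G α) ⟶ ∫_{σ₁}^{σ₃} G (β ∘ α)`. -/
def IsClassLaxity {σ₁ : MonLaxTrans F G p₁} {σ₂ : MonLaxTrans F G p₂}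
    {σ₃ : MonLaxTrans F G p₃} (α : Strict2NatTrans p₁ p₂) (β : Strict2NatTrans p₂ p₃)
    (βα : Strict2NatTrans p₁ p₃) (h : ∀ c : C, βα.app c = α.app c ≫ β.app c)
    (m : nerveClassifier F G σ₂ σ₃ β ⊗ nerveClassifier F G σ₁ σ₂ α ⟶
      nerveClassifier F G σ₁ σ₃ βα) : Prop :=
  ∀ c : C, m ≫ classProj F G σ₁ σ₃ βα c =
    (classProj F G σ₂ σ₃ β c ⊗ₘ classProj F G σ₁ σ₂ α c) ≫ (β_ _ _).hom ≫
      G.μ (α.app c) (β.app c) ≫ eqToHom (by rw [h])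

/-- The canonical evaluation map `F(f) ⊗ ∫_{σ₁}^{σ₂} G α ⟶ G(α_d ∘ p₁ f)`,
obtained from the equalizer and adjoint transposition. -/
noncomputable def evMap (σ₁ : MonLaxTrans F G p₁) (σ₂ : MonLaxTrans F G p₂)
    (α : Strict2NatTrans p₁ p₂) {c d : C} (f : c ⟶ d) :
    F.map f ⊗ nerveClassifier F G σ₁ σ₂ α ⟶ G.map (p₁.map f ≫ α.app d) :=
  MonoidalClosed.uncurry
    (equalizer.ι (classifyA F G σ₁ σ₂ α) (classifyB F G σ₁ σ₂ α) ≫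
      classifyA F G σ₁ σ₂ α ≫ Pi.π _ (⟨c, d, f⟩ : OneCell C))

end Classifier



section Helpers

open MonoidalCategory

universe u' v' w' u₂' v₂' w₂' u₀' v₀'

variable {C : Type u'} [Bicategory.{w', v'} C] [Bicategory.Strict C]
variable {D : Type u₂'} [Bicategory.{w₂', v₂'} D] [Bicategory.Strict D]
variable {M : Type u₀'} [Category.{v₀'} M] [MonoidalCategory M]

theorem MonLaxFunctor.map₂_eqToHom (G : MonLaxFunctor D M) {a b : D} {f g : a ⟶ b}
    (h : f = g) : G.map₂ (eqToHom h) = eqToHom (by rw [h]) := by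
  subst h; rw [eqToHom_refl, eqToHom_refl, G.map₂_id]

section Sym
variable [SymmetricCategory M]

/-- Structural Yang–Baxter style coherence. -/
theorem braid_assoc_coherence (X Y Z : M) :
    (α_ X Y Z).hom ≫ (X ◁ (β_ Y Z).hom) ≫ (β_ X (Z ⊗ Y)).hom ≫ (α_ Z Y X).hom =
      ((β_ X Y).hom ▷ Z) ≫ (β_ (Y ⊗ X) Z).hom := by
  simp only [BraidedCategory.braiding_tensor_right_hom, Category.assoc, Iso.inv_hom_id,
    Category.comp_id, BraidedCategory.braiding_tensor_left_hom]
  rw [← cancel_epi (α_ X Y Z).inv, Iso.inv_hom_id_assoc]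
  simpa using (BraidedCategory.yang_baxter X Y Z).symm

theorem unit_right_helper (G : MonLaxFunctor D M) {A B : D} (f : A ⟶ B) (e : B ⟶ B)
    (he : e = 𝟙 B) (fe : A ⟶ B) (hfe : fe = f ≫ e) {X : M} (x : X ⟶ G.map f) :
    ((G.ε' B ≫ eqToHom (show G.map (𝟙 B) = G.map e by rw [he])) ⊗ₘ x) ≫
        (β_ (G.map e) (G.map f)).hom ≫ G.μ f e ≫
        eqToHom (show G.map (f ≫ e) = G.map fe by rw [hfe]) =
      (λ_ X).hom ≫ x ≫
        eqToHom (show G.map f = G.map fe by rw [hfe, he, Category.comp_id]) := by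
  subst hfe; subst he
  simp only [eqToHom_refl, Category.comp_id]
  rw [BraidedCategory.braiding_naturality_assoc]
  rw [MonoidalCategory.tensorHom_def, Category.assoc]
  have hr := G.right_unit f
  rw [id_tensorHom] at hr
  slice_lhs 3 4 => rw [hr]
  rw [MonoidalCategory.rightUnitor_naturality_assoc,
    braiding_rightUnitor_assoc]

theorem unit_left_helper (G : MonLaxFunctor D M) {A B : D} (f : A ⟶ B) (e : A ⟶ A)
    (he : e = 𝟙 A) (ef : A ⟶ B) (hef : ef = e ≫ f) {X : M} (x : X ⟶ G.map f) :
    (x ⊗ₘ (G.ε' A ≫ eqToHom (show G.map (𝟙 A) = G.map e by rw [he]))) ≫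
        (β_ (G.map f) (G.map e)).hom ≫ G.μ e f ≫
        eqToHom (show G.map (e ≫ f) = G.map ef by rw [hef]) =
      (ρ_ X).hom ≫ x ≫
        eqToHom (show G.map f = G.map ef by rw [hef, he, Category.id_comp]) := by
  subst hef; subst he
  simp only [eqToHom_refl, Category.comp_id]
  rw [BraidedCategory.braiding_naturality_assoc]
  rw [MonoidalCategory.tensorHom_def', Category.assoc]
  have hl := G.left_unit f
  rw [tensorHom_id] at hl
  slice_lhs 3 4 => rw [hl]
  rw [MonoidalCategory.leftUnitor_naturality_assoc, braiding_leftUnitor_assoc]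

theorem assoc_helper (G : MonLaxFunctor D M) {A B Cc Dd : D}
    (a : A ⟶ B) (b : B ⟶ Cc) (g : Cc ⟶ Dd)
    (ba : A ⟶ Cc) (hba : ba = a ≫ b) (gb : B ⟶ Dd) (hgb : gb = b ≫ g)
    (gba : A ⟶ Dd) (hA : gba = ba ≫ g) (hB : gba = a ≫ gb) :
    (α_ (G.map g) (G.map b) (G.map a)).hom ≫
      (𝟙 (G.map g) ⊗ₘ ((β_ (G.map b) (G.map a)).hom ≫ G.μ a b ≫
        eqToHom (show G.map (a ≫ b) = G.map ba by rw [hba]))) ≫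
      (β_ (G.map g) (G.map ba)).hom ≫ G.μ ba g ≫
      eqToHom (show G.map (ba ≫ g) = G.map gba by rw [hA]) =
    (((β_ (G.map g) (G.map b)).hom ≫ G.μ b g ≫
        eqToHom (show G.map (b ≫ g) = G.map gb by rw [hgb])) ⊗ₘ 𝟙 (G.map a)) ≫
      (β_ (G.map gb) (G.map a)).hom ≫ G.μ a gb ≫
      eqToHom (show G.map (a ≫ gb) = G.map gba by rw [hB]) := by
  subst hba; subst hgb; subst hA
  simp only [eqToHom_refl, Category.comp_id, id_tensorHom, tensorHom_id,
    MonoidalCategory.whiskerLeft_comp, MonoidalCategory.comp_whiskerRight, Category.assoc]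
  -- LHS: α_ ≫ Gg ◁ β_ ≫ Gg ◁ μ a b ≫ β_ ≫ μ (a≫b) g
  -- RHS: β_ ▷ Ga ≫ μ b g ▷ Ga ≫ β_ ≫ μ a (b≫g) ≫ eqToHom
  rw [BraidedCategory.braiding_naturality_right_assoc (G.map g) (G.μ a b)]
  rw [BraidedCategory.braiding_naturality_left_assoc (G.μ b g) (G.map a)]
  have ha := G.assoc a b g
  have ha' : (G.μ a b ▷ G.map g) ≫ G.μ (a ≫ b) g =
      (α_ (G.map a) (G.map b) (G.map g)).hom ≫ (G.map a ◁ G.μ b g) ≫ G.μ a (b ≫ g) ≫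
        eqToHom (show G.map (a ≫ b ≫ g) = G.map ((a ≫ b) ≫ g) by rw [Category.assoc]) := by
    rw [id_tensorHom, tensorHom_id] at ha
    have h2 := congrArg
      (· ≫ eqToHom (show G.map (a ≫ b ≫ g) = G.map ((a ≫ b) ≫ g) by rw [Category.assoc])) ha
    simpa [eqToHom_trans, Category.assoc] using h2
  slice_lhs 4 5 => rw [ha']
  slice_lhs 1 4 => rw [braid_assoc_coherence]
  simp only [Category.assoc]

theorem tensor_split_l {X Y Z W U : M} (x : X ⟶ W) (u : Y ⟶ Z) (R : Z ⟶ U) :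
    (x ⊗ₘ (u ≫ R)) = (x ⊗ₘ u) ≫ (𝟙 W ⊗ₘ R) := by
  rw [tensorHom_comp_tensorHom, Category.comp_id]

theorem tensor_split_r {X Y Z W U : M} (z : X ⟶ W) (u : Y ⟶ Z) (R : Z ⟶ U) :
    ((u ≫ R) ⊗ₘ z) = (u ⊗ₘ z) ≫ (R ⊗ₘ 𝟙 W) := by
  rw [tensorHom_comp_tensorHom, Category.comp_id]

theorem assoc_helper' (G : MonLaxFunctor D M) {A B Cc Dd : D}
    (a : A ⟶ B) (b : B ⟶ Cc) (g : Cc ⟶ Dd)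
    (ba : A ⟶ Cc) (hba : ba = a ≫ b) (gb : B ⟶ Dd) (hgb : gb = b ≫ g)
    (gba : A ⟶ Dd) (hA : gba = ba ≫ g) (hB : gba = a ≫ gb)
    {X Y Z : M} (x : X ⟶ G.map g) (y : Y ⟶ G.map b) (z : Z ⟶ G.map a) :
    (α_ X Y Z).hom ≫
      (x ⊗ₘ ((y ⊗ₘ z) ≫ (β_ (G.map b) (G.map a)).hom ≫ G.μ a b ≫
        eqToHom (show G.map (a ≫ b) = G.map ba by rw [hba]))) ≫
      (β_ (G.map g) (G.map ba)).hom ≫ G.μ ba g ≫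
      eqToHom (show G.map (ba ≫ g) = G.map gba by rw [hA]) =
    (((x ⊗ₘ y) ≫ (β_ (G.map g) (G.map b)).hom ≫ G.μ b g ≫
        eqToHom (show G.map (b ≫ g) = G.map gb by rw [hgb])) ⊗ₘ z) ≫
      (β_ (G.map gb) (G.map a)).hom ≫ G.μ a gb ≫
      eqToHom (show G.map (a ≫ gb) = G.map gba by rw [hB]) := by
  rw [tensor_split_l x (y ⊗ₘ z), tensor_split_r z (x ⊗ₘ y)]
  simp only [Category.assoc]
  rw [← associator_naturality_assoc x y z]
  have core := assoc_helper G a b g ba hba gb hgb gba hA hB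
  rw [core]

end Sym

section Cls

variable {M : Type u₀} [Category.{v₀} M] [MonoidalCategory M] [SymmetricCategory M]
  [MonoidalClosed M] [HasProducts.{u} M] [HasProducts.{max u v} M] [HasEqualizers M]
variable {C : Type u} [Bicategory.{w, v} C] [Bicategory.Strict C]
variable {D : Type u₂} [Bicategory.{w₂, v₂} D] [Bicategory.Strict D]

theorem class_hom_ext (F : MonLaxFunctor C M) (G : MonLaxFunctor D M)
    {p₁ p₂ : StrictTwoFunctor C D} (σ₁ : MonLaxTrans F G p₁) (σ₂ : MonLaxTrans F G p₂)
    (α : Strict2NatTrans p₁ p₂) {X : M} {f g : X ⟶ nerveClassifier F G σ₁ σ₂ α}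
    (h : ∀ c : C, f ≫ classProj F G σ₁ σ₂ α c = g ≫ classProj F G σ₁ σ₂ α c) : f = g := by
  apply equalizer.hom_ext
  apply limit.hom_ext
  rintro ⟨c⟩
  have := h c
  simp only [classProj] at this
  exact (Category.assoc _ _ _).trans (this.trans (Category.assoc _ _ _).symm)

end Cls

end Helpers


/-- the classifying objects, the canonical laxity maps and the unit maps
induced by the unit laxity maps of `G` satisfy all the axioms of a lax functor
`HOM(F,G) : B(F,G) → M`: associativity coherence and the two unit coherences. -/
theorem hom_is_lax_functor
    {C : Type u} [Bicategory.{w, v} C] [Bicategory.Strict C]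
    {D : Type u₂} [Bicategory.{w₂, v₂} D] [Bicategory.Strict D]
    {M : Type u₀} [Category.{v₀} M] [MonoidalCategory M]
    [SymmetricCategory M] [MonoidalClosed M]
    [HasProducts.{u} M] [HasProducts.{max u v} M] [HasEqualizers M]
    (F : MonLaxFunctor C M) (G : MonLaxFunctor D M)
    {p₁ p₂ : StrictTwoFunctor C D}
    (σ₁ : MonLaxTrans F G p₁) (σ₂ : MonLaxTrans F G p₂)
    (α : Strict2NatTrans p₁ p₂)
    (ι₁ : Strict2NatTrans p₁ p₁) (hι₁ : ∀ c : C, ι₁.app c = 𝟙 (p₁.obj c))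
    (ι₂ : Strict2NatTrans p₂ p₂) (hι₂ : ∀ c : C, ι₂.app c = 𝟙 (p₂.obj c))
    (u₁ : 𝟙_ M ⟶ nerveClassifier F G σ₁ σ₁ ι₁)
    (hu₁ : ∀ c : C, u₁ ≫ classProj F G σ₁ σ₁ ι₁ c = G.ε' (p₁.obj c) ≫ eqToHom (by rw [hι₁]))
    (u₂ : 𝟙_ M ⟶ nerveClassifier F G σ₂ σ₂ ι₂)
    (hu₂ : ∀ c : C, u₂ ≫ classProj F G σ₂ σ₂ ι₂ c = G.ε' (p₂.obj c) ≫ eqToHom (by rw [hι₂]))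
    (ι₂α : Strict2NatTrans p₁ p₂) (h₂ : ∀ c : C, ι₂α.app c = α.app c ≫ ι₂.app c)
    (mR : nerveClassifier F G σ₂ σ₂ ι₂ ⊗ nerveClassifier F G σ₁ σ₂ α ⟶
      nerveClassifier F G σ₁ σ₂ ι₂α)
    (hmR : IsClassLaxity F G (σ₁ := σ₁) (σ₂ := σ₂) (σ₃ := σ₂) α ι₂ ι₂α h₂ mR)
    (αι₁ : Strict2NatTrans p₁ p₂) (h₁ : ∀ c : C, αι₁.app c = ι₁.app c ≫ α.app c)
    (mL : nerveClassifier F G σ₁ σ₂ α ⊗ nerveClassifier F G σ₁ σ₁ ι₁ ⟶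
      nerveClassifier F G σ₁ σ₂ αι₁)
    (hmL : IsClassLaxity F G (σ₁ := σ₁) (σ₂ := σ₁) (σ₃ := σ₂) ι₁ α αι₁ h₁ mL)
    (ΔR : Modification2 α ι₂α)
    (hΔR : ∀ c : C, ΔR.app c = eqToHom (by rw [h₂, hι₂, Category.comp_id]))
    (eR : nerveClassifier F G σ₁ σ₂ α ⟶ nerveClassifier F G σ₁ σ₂ ι₂α)
    (heR : IsClassInduced F G (σ₁ := σ₁) (σ₂ := σ₂) ΔR eR)
    (ΔL : Modification2 α αι₁)
    (hΔL : ∀ c : C, ΔL.app c = eqToHom (by rw [h₁, hι₁, Category.id_comp]))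
    (eL : nerveClassifier F G σ₁ σ₂ α ⟶ nerveClassifier F G σ₁ σ₂ αι₁)
    (heL : IsClassInduced F G (σ₁ := σ₁) (σ₂ := σ₂) ΔL eL) :
    ((u₂ ⊗ₘ 𝟙 (nerveClassifier F G σ₁ σ₂ α)) ≫ mR =
        (λ_ (nerveClassifier F G σ₁ σ₂ α)).hom ≫ eR) ∧
    ((𝟙 (nerveClassifier F G σ₁ σ₂ α) ⊗ₘ u₁) ≫ mL =
        (ρ_ (nerveClassifier F G σ₁ σ₂ α)).hom ≫ eL) ∧
    (∀ {p₃ p₄ : StrictTwoFunctor C D}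
      (σ₃ : MonLaxTrans F G p₃) (σ₄ : MonLaxTrans F G p₄)
      (β : Strict2NatTrans p₂ p₃) (γ : Strict2NatTrans p₃ p₄)
      (βα : Strict2NatTrans p₁ p₃) (hβα : ∀ c : C, βα.app c = α.app c ≫ β.app c)
      (γβ : Strict2NatTrans p₂ p₄) (hγβ : ∀ c : C, γβ.app c = β.app c ≫ γ.app c)
      (γβα : Strict2NatTrans p₁ p₄)
      (ha : ∀ c : C, γβα.app c = βα.app c ≫ γ.app c)
      (hb : ∀ c : C, γβα.app c = α.app c ≫ γβ.app c)
      (m₁ : nerveClassifier F G σ₂ σ₃ β ⊗ nerveClassifier F G σ₁ σ₂ α ⟶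
        nerveClassifier F G σ₁ σ₃ βα)
      (_ : IsClassLaxity F G (σ₁ := σ₁) (σ₂ := σ₂) (σ₃ := σ₃) α β βα hβα m₁)
      (m₂ : nerveClassifier F G σ₃ σ₄ γ ⊗ nerveClassifier F G σ₁ σ₃ βα ⟶
        nerveClassifier F G σ₁ σ₄ γβα)
      (_ : IsClassLaxity F G (σ₁ := σ₁) (σ₂ := σ₃) (σ₃ := σ₄) βα γ γβα ha m₂)
      (m₃ : nerveClassifier F G σ₃ σ₄ γ ⊗ nerveClassifier F G σ₂ σ₃ β ⟶
        nerveClassifier F G σ₂ σ₄ γβ)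
      (_ : IsClassLaxity F G (σ₁ := σ₂) (σ₂ := σ₃) (σ₃ := σ₄) β γ γβ hγβ m₃)
      (m₄ : nerveClassifier F G σ₂ σ₄ γβ ⊗ nerveClassifier F G σ₁ σ₂ α ⟶
        nerveClassifier F G σ₁ σ₄ γβα)
      (_ : IsClassLaxity F G (σ₁ := σ₁) (σ₂ := σ₂) (σ₃ := σ₄) α γβ γβα hb m₄),
      (α_ (nerveClassifier F G σ₃ σ₄ γ) (nerveClassifier F G σ₂ σ₃ β)
          (nerveClassifier F G σ₁ σ₂ α)).hom ≫
        (𝟙 (nerveClassifier F G σ₃ σ₄ γ) ⊗ₘ m₁) ≫ m₂ =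
      (m₃ ⊗ₘ 𝟙 (nerveClassifier F G σ₁ σ₂ α)) ≫ m₄) := by
  obtain ⟨N⟩ : Nonempty (Unit) := ⟨()⟩
  refine ⟨?_, ?_, ?_⟩
  · apply class_hom_ext
    intro c
    simp only [Category.assoc]
    rw [hmR c, heR c, hΔR c, G.map₂_eqToHom]
    slice_lhs 1 2 => rw [tensorHom_comp_tensorHom, hu₂ c, Category.id_comp]
    simp only [Category.assoc]
    exact unit_right_helper G (α.app c) (ι₂.app c) (hι₂ c) (ι₂α.app c) (h₂ c)
      (classProj F G σ₁ σ₂ α c)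
  · apply class_hom_ext
    intro c
    simp only [Category.assoc]
    rw [hmL c, heL c, hΔL c, G.map₂_eqToHom]
    slice_lhs 1 2 => rw [tensorHom_comp_tensorHom, hu₁ c, Category.id_comp]
    simp only [Category.assoc]
    exact unit_left_helper G (α.app c) (ι₁.app c) (hι₁ c) (αι₁.app c) (h₁ c)
      (classProj F G σ₁ σ₂ α c)
  · intro p₃ p₄ σ₃ σ₄ β γ βα hβα γβ hγβ γβα ha hb m₁ hm₁ m₂ hm₂ m₃ hm₃ m₄ hm₄
    apply class_hom_ext
    intro c
    simp only [Category.assoc]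
    rw [hm₂ c, hm₄ c]
    slice_lhs 2 3 => rw [tensorHom_comp_tensorHom, Category.id_comp, hm₁ c]
    slice_rhs 1 2 => rw [tensorHom_comp_tensorHom, Category.id_comp, hm₃ c]
    simp only [Category.assoc]
    exact assoc_helper' G (α.app c) (β.app c) (γ.app c) (βα.app c) (hβα c)
      (γβ.app c) (hγβ c) (γβα.app c) (ha c) (hb c)
      (classProj F G σ₃ σ₄ γ c) (classProj F G σ₂ σ₃ β c) (classProj F G σ₁ σ₂ α c)
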